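/- arXiv:2303.06893 — 2 statements merged into one kernel-verified Lean document; each statement's English description precedes it below -/
import Mathlib

section
/- (sGS decomposition theorem) Let X_1,…,X_s (s ≥ 2) be finite-dimensional real inner product spaces, X = X_1×⋯×X_s, and let Q : X → X be a self-adjoint positive semidefinite linear operator with block decomposition Q = U + D + U*, where U is the strictly upper block triangular part and D = diag(Q_{1,1},…,Q_{s,s}) is the block diagonal part, each Q_{i,i} being positive definite. Let S = sGS(Q) := U D⁻¹ U*, let p be a closed proper convex function on X_1, c ∈ X, q(x) = ½⟨x, Qx⟩ − ⟨c, x⟩, and let z ∈ X be given. Let δ′, δ ∈ X be two error vectors with δ′_1 = δ_1 and define Δ(δ′,δ) := δ + U D⁻¹(δ − δ′). For i = s,…,2 define the backward sweep x′_i := argmin_{x_i ∈ X_i} { p(z_1) + q(z_{≤ i−1}; x_i; x′_{≥ i+1}) − ⟨δ′_i, x_i⟩ } = Q_{i,i}⁻¹( c_i + δ′_i − Σ_{j=1}^{i−1} Q_{j,i}* z_j − Σ_{j=i+1}^{s} Q_{i,j} x′_j ), and then the forward sweep x⁺_1 := argmin_{x_1 ∈ X_1} { p(x_1) + q(x_1;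 x′_{≥ 2}) − ⟨δ_1, x_1⟩ } and, for i = 2,…,s, x⁺_i := Q_{i,i}⁻¹( c_i + δ_i − Σ_{j=1}^{i−1} Q_{j,i}* x⁺_j − Σ_{j=i+1}^{s} Q_{i,j} x′_j ). Then x⁺ = (x⁺_1,…,x⁺_s) is the unique optimal solution of the problem min_{x ∈ X} { p(x_1) + q(x) + ½‖x − z‖²_S − ⟨x, Δ(δ′,δ)⟩ }, where ‖w‖²_S = ⟨w, S w⟩. -/
/-!
The objective `G(x) = q(x) + ½‖x - z‖²_S - ⟪x, Δ⟫` is quadratic with Hessian `Q + S`, and the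
sGS identity `Q + U D⁻¹ U* = (D + U) D⁻¹ (D + U*)` gives, for `x = x⁺ + d`,
`G(x) = G(x⁺) + ⟪∇G(x⁺), d⟫ + ½ ⟪(D + U*) d, D⁻¹ (D + U*) d⟫`.
The backward sweep is built so that, for `j ≥ 2`,
`x'_j - x⁺_j = D_j⁻¹((U*(x⁺ - z))_j - δ_j + δ'_j)`, which makes `∇G(x⁺)` vanish in every block
but the first; there it is the gradient of the smooth part of the `x₁`-subproblem solved by
`x⁺₁`, whose first-order optimality condition absorbs it into `p`. Hence
`F(x) ≥ F(x⁺) + ½ ⟪(D + U*) d, D⁻¹ (D + U*) d⟫`, and the last term vanishes only for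
`d = 0` because `D + U*` is block lower triangular with invertible diagonal.
-/

open Finset Filter Topology
open scoped RealInnerProductSpace

theorem LinearMap.IsSymmetric.of_rightInverse {𝕜 E : Type*} [RCLike 𝕜] [NormedAddCommGroup E]
    [InnerProductSpace 𝕜 E] {A B : E →ₗ[𝕜] E} (hA : A.IsSymmetric)
    (hBA : Function.RightInverse B A) : B.IsSymmetric := fun a b => by
  conv_lhs => rw [← hBA b]
  rw [← hA, hBA]

theorem inner_map_self_pos_of_rightInverse {E : Type*} [NormedAddCommGroup E]
    [InnerProductSpace ℝ E] {A B : E →ₗ[ℝ] E} (hA : ∀ a, a ≠ 0 → 0 < ⟪a, A a⟫)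
    (hBA : Function.RightInverse B A) {a : E} (ha : a ≠ 0) : 0 < ⟪a, B a⟫ := by
  have hBa : B a ≠ 0 := fun h => ha (by rw [← hBA a, h, map_zero])
  simpa only [hBA a, real_inner_comm] using hA (B a) hBa

theorem nonneg_of_forall_add_mul_nonneg {a b : ℝ} (h : ∀ ε ∈ Set.Ioo (0 : ℝ) 1, 0 ≤ a + ε * b) :
    0 ≤ a := by
  have hlim : Tendsto (fun ε => a + ε * b) (𝓝[>] 0) (𝓝 a) := by
    have : Tendsto (fun ε : ℝ => a + ε * b) (𝓝 0) (𝓝 (a + 0 * b)) :=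
      (continuous_const.add (continuous_id.mul continuous_const)).tendsto 0
    simpa using this.mono_left nhdsWithin_le_nhds
  exact ge_of_tendsto hlim (eventually_of_mem (Ioo_mem_nhdsGT one_pos) h)

/-- First-order optimality condition for minimizing a convex function plus a quadratic one. -/
theorem le_add_inner_of_forall_add_le {E : Type*} [NormedAddCommGroup E] [InnerProductSpace ℝ E]
    {p : E → EReal} (hp_bot : ∀ x, p x ≠ ⊥)
    (hp_convex : ∀ (x y : E) (a b : ℝ), 0 ≤ a → 0 ≤ b → a + b = 1 →
      p (a • x + b • y) ≤ (a : EReal) * p x + (b : EReal) * p y)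
    {φ : E → ℝ} {A : E →L[ℝ] E} {y g : E}
    (hφ : ∀ t, φ t = φ y + ⟪t - y, g⟫ + 1/2 * ⟪t - y, A (t - y)⟫)
    (hmin : ∀ t, p y + φ y ≤ p t + φ t) (t : E) :
    p y ≤ p t + ⟪t - y, g⟫ := by
  rcases eq_or_ne (p t) ⊤ with ht | ht
  · simp [ht]
  have hy : p y ≠ ⊤ := fun hy => by
    have := hmin t
    rw [hy, EReal.top_add_coe, top_le_iff] at this
    exact (EReal.add_lt_top ht (EReal.coe_ne_top _)).ne this
  obtain ⟨a, ha⟩ : ∃ a : ℝ, p t = a := ⟨_, (EReal.coe_toReal ht (hp_bot t)).symm⟩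
  obtain ⟨b, hb⟩ : ∃ b : ℝ, p y = b := ⟨_, (EReal.coe_toReal hy (hp_bot y)).symm⟩
  suffices 0 ≤ a - b + ⟪t - y, g⟫ by
    rw [ha, hb, ← EReal.coe_add, EReal.coe_le_coe_iff]
    linarith
  -- compare `y` with `y + ε • (t - y)` and let `ε → 0`
  refine nonneg_of_forall_add_mul_nonneg (b := 1/2 * ⟪t - y, A (t - y)⟫) fun ε ⟨hε0, hε1⟩ => ?_
  have hconv := hp_convex y t (1 - ε) ε (by linarith) hε0.le (by ring)
  rw [ha, hb, ← EReal.coe_mul, ← EReal.coe_mul, ← EReal.coe_add] at hconv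
  have hm := (hmin _).trans (add_le_add hconv le_rfl)
  rw [hb, ← EReal.coe_add, ← EReal.coe_add, EReal.coe_le_coe_iff, hφ ((1 - ε) • y + ε • t),
    show (1 - ε) • y + ε • t - y = ε • (t - y) by module] at hm
  simp only [map_smul, real_inner_smul_left, real_inner_smul_right] at hm
  refine (mul_nonneg_iff_of_pos_left hε0).1 ?_
  nlinarith

noncomputable section

section BlockOperators

variable {ι : Type*} [Fintype ι] {X : ι → Type*}
  [∀ i, NormedAddCommGroup (X i)] [∀ i, InnerProductSpace ℝ (X i)]
  (Q : ∀ i j, X j →L[ℝ] X i) (W : ∀ i, X i →L[ℝ] X i)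

def IsBlockSymmetric : Prop := ∀ i j (a : X j) (b : X i), ⟪Q i j a, b⟫ = ⟪a, Q j i b⟫

def blockMulVecOn (s : ι → Finset ι) : (∀ i, X i) →ₗ[ℝ] ∀ i, X i where
  toFun x i := ∑ j ∈ s i, Q i j (x j)
  map_add' x y := by ext i; simp [sum_add_distrib]
  map_smul' a x := by ext i; simp [smul_sum]

def blockMulVec := blockMulVecOn Q fun _ => univ

def blockWeightedNormSq (w : ∀ i, X i) : ℝ := ∑ i, ⟪w i, W i (w i)⟫

def quadObjective (c x : ∀ i, X i) : ℝ := 1/2 * ∑ i, ⟪x i, blockMulVec Q x i⟫ - ∑ i, ⟪c i, x i⟫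

variable {Q W}

theorem blockMulVec_apply (x : ∀ i, X i) (i : ι) : blockMulVec Q x i = ∑ j, Q i j (x j) := rfl

theorem sum_inner_single_left [DecidableEq ι] (i : ι) (a : X i) (v : ∀ j, X j) :
    ∑ j, ⟪Pi.single i a j, v j⟫ = ⟪a, v i⟫ :=
  (sum_eq_single i (fun j _ hj => by simp [hj]) (by simp)).trans (by simp)

theorem sum_inner_single_right [DecidableEq ι] (i : ι) (a : X i) (v : ∀ j, X j) :
    ∑ j, ⟪v j, Pi.single i a j⟫ = ⟪v i, a⟫ := by
  simpa only [real_inner_comm] using sum_inner_single_left i a v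

theorem blockWeightedNormSq_add (hW : ∀ i, (W i : X i →ₗ[ℝ] X i).IsSymmetric) (v d : ∀ i, X i) :
    blockWeightedNormSq W (v + d) =
      blockWeightedNormSq W v + 2 * ∑ i, ⟪d i, W i (v i)⟫ + blockWeightedNormSq W d := by
  have hcomm : ∀ i, ⟪v i, W i (d i)⟫ = ⟪d i, W i (v i)⟫ := fun i => by
    rw [← real_inner_comm, ← (hW i).apply_clm, real_inner_comm]
  simp only [blockWeightedNormSq, Pi.add_apply, map_add, inner_add_left, inner_add_right,
    sum_add_distrib, hcomm]
  ring

theorem blockWeightedNormSq_pos (hW : ∀ i (a : X i), a ≠ 0 → 0 < ⟪a, W i a⟫) {w : ∀ i, X i}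
    (hw : w ≠ 0) : 0 < blockWeightedNormSq W w := by
  have hterm i : 0 ≤ ⟪w i, W i (w i)⟫ := by
    rcases eq_or_ne (w i) 0 with h | h
    · simp [h]
    · exact (hW i _ h).le
  obtain ⟨i, hi⟩ := Function.ne_iff.1 hw
  exact sum_pos' (fun j _ => hterm j) ⟨i, mem_univ i, hW i _ hi⟩

theorem blockWeightedNormSq_nonneg (hW : ∀ i (a : X i), a ≠ 0 → 0 < ⟪a, W i a⟫) (w : ∀ i, X i) :
    0 ≤ blockWeightedNormSq W w := by
  rcases eq_or_ne w 0 with rfl | hw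
  · simp [blockWeightedNormSq]
  · exact (blockWeightedNormSq_pos hW hw).le

theorem IsBlockSymmetric.sum_inner_blockMulVec_comm (hQ : IsBlockSymmetric Q)
    (x y : ∀ i, X i) :
    ∑ i, ⟪x i, blockMulVec Q y i⟫ = ∑ i, ⟪y i, blockMulVec Q x i⟫ := by
  simp only [blockMulVec_apply, inner_sum]
  rw [sum_comm]
  exact sum_congr rfl fun j _ => sum_congr rfl fun i _ => by rw [← hQ, real_inner_comm]

theorem IsBlockSymmetric.quadObjective_add (hQ : IsBlockSymmetric Q) (c y d : ∀ i, X i) :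
    quadObjective Q c (y + d) = quadObjective Q c y + ∑ i, ⟪d i, blockMulVec Q y i - c i⟫ +
      1/2 * ∑ i, ⟪d i, blockMulVec Q d i⟫ := by
  have hcomm := hQ.sum_inner_blockMulVec_comm y d
  simp only [quadObjective, map_add, Pi.add_apply, inner_add_left, inner_add_right,
    inner_sub_right, sum_add_distrib, sum_sub_distrib, real_inner_comm (c _)] at hcomm ⊢
  linarith

theorem IsBlockSymmetric.quadObjective_update [DecidableEq ι] (hQ : IsBlockSymmetric Q)
    (c y : ∀ i, X i) (i : ι) (t : X i) :
    quadObjective Q c (Function.update y i t) = quadObjective Q c y +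
      ⟪t - y i, blockMulVec Q y i - c i⟫ + 1/2 * ⟪t - y i, Q i i (t - y i)⟫ := by
  have hupd : Function.update y i t = y + Pi.single i (t - y i) := by
    ext j
    rcases eq_or_ne j i with rfl | hj <;> simp [*]
  have hQsingle : blockMulVec Q (Pi.single i (t - y i)) i = Q i i (t - y i) :=
    (sum_eq_single i (fun j _ hj => by simp [hj]) (by simp)).trans (by simp)
  rw [hupd, hQ.quadObjective_add, sum_inner_single_left, sum_inner_single_left, hQsingle]

theorem IsBlockSymmetric.le_add_inner_of_forall_le_update [DecidableEq ι]
    (hQ : IsBlockSymmetric Q) {i : ι} {p : X i → EReal} (hp_bot : ∀ x, p x ≠ ⊥)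
    (hp_convex : ∀ (x y : X i) (a b : ℝ), 0 ≤ a → 0 ≤ b → a + b = 1 →
      p (a • x + b • y) ≤ (a : EReal) * p x + (b : EReal) * p y)
    {c δ x : ∀ i, X i} {s : X i}
    (hs : ∀ t : X i,
      p s + ((quadObjective Q c (Function.update x i s) - ⟪δ i, s⟫ : ℝ) : EReal) ≤
      p t + ((quadObjective Q c (Function.update x i t) - ⟪δ i, t⟫ : ℝ) : EReal)) (t : X i) :
    p s ≤ p t + ⟪t - s, blockMulVec Q (Function.update x i s) i - c i - δ i⟫ := by
  refine le_add_inner_of_forall_add_le hp_bot hp_convex (A := Q i i)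
    (φ := fun t => quadObjective Q c (Function.update x i t) - ⟪δ i, t⟫) (fun t => ?_) hs t
  have h := hQ.quadObjective_update c (Function.update x i s) i t
  rw [Function.update_idem, Function.update_self] at h
  simp only [h, inner_sub_right, real_inner_comm (δ i)]
  ring

variable [LinearOrder ι] (Q W)

def lowerMulVec := blockMulVecOn Q fun i => univ.filter (· ≤ i)

def strictLowerMulVec := blockMulVecOn Q fun i => univ.filter (· < i)

def strictUpperMulVec := blockMulVecOn Q fun i => univ.filter (i < ·)

/-- `‖w‖²_S` for `S = U D⁻¹ U*`, where `W` plays the role of `D⁻¹`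
and `U* = strictLowerMulVec Q`. -/
def sgsNormSq (w : ∀ i, X i) : ℝ := blockWeightedNormSq W (strictLowerMulVec Q w)

def sgsObjective (c z Δ x : ∀ i, X i) : ℝ :=
  quadObjective Q c x + 1/2 * sgsNormSq Q W (x - z) - ∑ i, ⟪x i, Δ i⟫

def sgsGradient (c z Δ y : ∀ i, X i) : ∀ i, X i :=
  blockMulVec Q y - c + strictUpperMulVec Q (fun j => W j (strictLowerMulVec Q (y - z) j)) - Δ

def sgsDelta (δ' δ : ∀ i, X i) : ∀ i, X i := δ + strictUpperMulVec Q fun j => W j (δ j - δ' j)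

variable {Q W}

theorem lowerMulVec_apply (x : ∀ i, X i) (i : ι) :
    lowerMulVec Q x i = ∑ j ∈ univ.filter (· ≤ i), Q i j (x j) := rfl

theorem strictLowerMulVec_apply (x : ∀ i, X i) (i : ι) :
    strictLowerMulVec Q x i = ∑ j ∈ univ.filter (· < i), Q i j (x j) := rfl

theorem strictUpperMulVec_apply (x : ∀ i, X i) (i : ι) :
    strictUpperMulVec Q x i = ∑ j ∈ univ.filter (i < ·), Q i j (x j) := rfl

theorem blockMulVec_apply_eq_lowerMulVec_add_strictUpperMulVec (x : ∀ i, X i) (i : ι) :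
    blockMulVec Q x i = lowerMulVec Q x i + strictUpperMulVec Q x i := by
  rw [blockMulVec_apply, lowerMulVec_apply, strictUpperMulVec_apply,
    ← sum_filter_add_sum_filter_not univ (· ≤ i)]
  simp only [not_le]

theorem lowerMulVec_apply_eq_add_strictLowerMulVec (x : ∀ i, X i) (i : ι) :
    lowerMulVec Q x i = Q i i (x i) + strictLowerMulVec Q x i := by
  have : univ.filter (· ≤ i) = insert i (univ.filter (· < i)) := by
    ext j; simp [le_iff_eq_or_lt]
  rw [lowerMulVec_apply, strictLowerMulVec_apply, this, sum_insert (by simp)]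

theorem strictUpperMulVec_congr {x y : ∀ i, X i} {i : ι} (h : ∀ j, i < j → x j = y j) :
    strictUpperMulVec Q x i = strictUpperMulVec Q y i :=
  sum_congr rfl fun j hj => by rw [h j (mem_filter.1 hj).2]

theorem eq_zero_of_lowerMulVec_eq_zero (hQ : ∀ i, Function.Injective (Q i i)) {d : ∀ i, X i}
    (h : lowerMulVec Q d = 0) : d = 0 := by
  funext i
  induction i using WellFoundedLT.induction with
  | ind i ih =>
    have hL : strictLowerMulVec Q d i = 0 :=
      sum_eq_zero fun j hj => by rw [ih j (mem_filter.1 hj).2, Pi.zero_apply, map_zero]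
    apply hQ i
    simpa [lowerMulVec_apply_eq_add_strictLowerMulVec, hL] using congrFun h i

theorem IsBlockSymmetric.sum_inner_strictLowerMulVec (hQ : IsBlockSymmetric Q)
    (x y : ∀ i, X i) :
    ∑ i, ⟪strictLowerMulVec Q x i, y i⟫ = ∑ i, ⟪x i, strictUpperMulVec Q y i⟫ := by
  simp only [strictLowerMulVec_apply, strictUpperMulVec_apply, sum_inner, inner_sum]
  simp only [hQ _ _]
  exact sum_comm' (by simp)

/-- The sGS identity `Q + U D⁻¹ U* = (D + U) D⁻¹ (D + U*)`, as quadratic forms. -/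
theorem IsBlockSymmetric.sum_inner_blockMulVec_add_sgsNormSq (hQ : IsBlockSymmetric Q)
    (hQW : ∀ i a, Q i i (W i a) = a) (hWQ : ∀ i a, W i (Q i i a) = a) (d : ∀ i, X i) :
    ∑ i, ⟪d i, blockMulVec Q d i⟫ + sgsNormSq Q W d = blockWeightedNormSq W (lowerMulVec Q d) := by
  have hU : ∑ i, ⟪d i, strictUpperMulVec Q d i⟫ = ∑ i, ⟪d i, strictLowerMulVec Q d i⟫ :=
    (hQ.sum_inner_strictLowerMulVec d d).symm.trans (sum_congr rfl fun i _ => real_inner_comm _ _)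
  have hi : ∀ i, ⟪lowerMulVec Q d i, W i (lowerMulVec Q d i)⟫ = ⟪d i, Q i i (d i)⟫ +
      2 * ⟪d i, strictLowerMulVec Q d i⟫ +
        ⟪strictLowerMulVec Q d i, W i (strictLowerMulVec Q d i)⟫ := fun i => by
    rw [lowerMulVec_apply_eq_add_strictLowerMulVec, map_add, hWQ, inner_add_left, inner_add_right,
      inner_add_right, hQ i i (d i) (W i _), hQW, real_inner_comm (d i) (Q i i (d i)),
      real_inner_comm (d i) (strictLowerMulVec Q d i)]
    ring
  simp only [blockWeightedNormSq, hi]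
  simp only [sgsNormSq, blockWeightedNormSq, blockMulVec_apply_eq_lowerMulVec_add_strictUpperMulVec,
    lowerMulVec_apply_eq_add_strictLowerMulVec, inner_add_right, sum_add_distrib, ← mul_sum]
  linarith

theorem IsBlockSymmetric.sgsNormSq_add (hQ : IsBlockSymmetric Q)
    (hW : ∀ i, (W i : X i →ₗ[ℝ] X i).IsSymmetric) (v d : ∀ i, X i) :
    sgsNormSq Q W (v + d) = sgsNormSq Q W v +
      2 * ∑ i, ⟪d i, strictUpperMulVec Q (fun j => W j (strictLowerMulVec Q v j)) i⟫ +
        sgsNormSq Q W d := by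
  rw [sgsNormSq, map_add, blockWeightedNormSq_add hW, ← hQ.sum_inner_strictLowerMulVec]
  rfl

theorem IsBlockSymmetric.sgsObjective_add (hQ : IsBlockSymmetric Q)
    (hQW : ∀ i a, Q i i (W i a) = a) (hWQ : ∀ i a, W i (Q i i a) = a) (c z Δ y d : ∀ i, X i) :
    sgsObjective Q W c z Δ (y + d) = sgsObjective Q W c z Δ y +
      ∑ i, ⟪d i, sgsGradient Q W c z Δ y i⟫ + 1/2 * blockWeightedNormSq W (lowerMulVec Q d) := by
  have hW i : (W i : X i →ₗ[ℝ] X i).IsSymmetric :=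
    LinearMap.IsSymmetric.of_rightInverse (fun a b => hQ i i a b) (hQW i)
  rw [sgsObjective, sgsObjective, ← hQ.sum_inner_blockMulVec_add_sgsNormSq hQW hWQ,
    hQ.quadObjective_add, add_sub_right_comm y d z, hQ.sgsNormSq_add hW]
  simp only [sgsGradient, Pi.add_apply, Pi.sub_apply, inner_add_left, inner_sub_right,
    inner_add_right, sum_add_distrib, sum_sub_distrib]
  ring

end BlockOperators

section Sweep

variable {n : ℕ} [NeZero n] {X : Fin n → Type*}
  [∀ i, NormedAddCommGroup (X i)] [∀ i, InnerProductSpace ℝ (X i)]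
  {Q : ∀ i j, X j →L[ℝ] X i} {W : ∀ i, X i →L[ℝ] X i}

theorem lowerMulVec_apply_zero (x : ∀ i, X i) : lowerMulVec Q x 0 = Q 0 0 (x 0) := by
  simp [lowerMulVec_apply_eq_add_strictLowerMulVec, strictLowerMulVec_apply]

theorem blockMulVec_update_zero_apply_zero (x : ∀ i, X i) (t : X 0) :
    blockMulVec Q (Function.update x 0 t) 0 = Q 0 0 t + strictUpperMulVec Q x 0 := by
  rw [blockMulVec_apply_eq_lowerMulVec_add_strictUpperMulVec, lowerMulVec_apply_zero,
    Function.update_self, strictUpperMulVec_congr fun j hj => Function.update_of_ne hj.ne' _ _]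

variable {c z δ' δ x' xp : ∀ i, X i}

theorem sgsGradient_of_sweep (hQW : ∀ i a, Q i i (W i a) = a)
    (hx' : ∀ i, i ≠ 0 →
      x' i = W i (c i + δ' i - strictLowerMulVec Q z i - strictUpperMulVec Q x' i))
    (hxp : ∀ i, i ≠ 0 →
      xp i = W i (c i + δ i - strictLowerMulVec Q xp i - strictUpperMulVec Q x' i)) :
    sgsGradient Q W c z (sgsDelta Q W δ' δ) xp =
      Pi.single 0 (blockMulVec Q (Function.update x' 0 (xp 0)) 0 - c 0 - δ 0) := by
  funext i
  have hx'xp : strictUpperMulVec Q x' i = strictUpperMulVec Q (xp +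
      (fun j => W j (strictLowerMulVec Q (xp - z) j)) - fun j => W j (δ j - δ' j)) i := by
    refine strictUpperMulVec_congr fun j hj => ?_
    have hj0 : j ≠ 0 := ((Fin.zero_le i).trans_lt hj).ne'
    simp only [Pi.add_apply, Pi.sub_apply]
    rw [hx' j hj0, hxp j hj0, ← map_add, ← map_sub, map_sub (strictLowerMulVec Q) xp z,
      Pi.sub_apply]
    congr 1
    abel
  have hgrad : sgsGradient Q W c z (sgsDelta Q W δ' δ) xp i =
      lowerMulVec Q xp i + strictUpperMulVec Q x' i - c i - δ i := by
    rw [sgsGradient, sgsDelta, hx'xp, map_sub (strictUpperMulVec Q), map_add (strictUpperMulVec Q)]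
    simp only [Pi.add_apply, Pi.sub_apply, blockMulVec_apply_eq_lowerMulVec_add_strictUpperMulVec]
    abel
  rw [hgrad]
  rcases eq_or_ne i 0 with rfl | hi
  · rw [Pi.single_eq_same, blockMulVec_update_zero_apply_zero, lowerMulVec_apply_zero]
  · rw [Pi.single_eq_of_ne hi, lowerMulVec_apply_eq_add_strictLowerMulVec, hxp i hi, hQW]
    abel

theorem IsBlockSymmetric.sgsObjective_eq_of_sweep (hQ : IsBlockSymmetric Q)
    (hQW : ∀ i a, Q i i (W i a) = a) (hWQ : ∀ i a, W i (Q i i a) = a)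
    (hx' : ∀ i, i ≠ 0 →
      x' i = W i (c i + δ' i - strictLowerMulVec Q z i - strictUpperMulVec Q x' i))
    (hxp : ∀ i, i ≠ 0 →
      xp i = W i (c i + δ i - strictLowerMulVec Q xp i - strictUpperMulVec Q x' i))
    (x : ∀ i, X i) :
    sgsObjective Q W c z (sgsDelta Q W δ' δ) x = sgsObjective Q W c z (sgsDelta Q W δ' δ) xp +
      ⟪x 0 - xp 0, blockMulVec Q (Function.update x' 0 (xp 0)) 0 - c 0 - δ 0⟫ +
      1/2 * blockWeightedNormSq W (lowerMulVec Q (x - xp)) := by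
  have h := hQ.sgsObjective_add hQW hWQ c z (sgsDelta Q W δ' δ) xp (x - xp)
  rwa [add_sub_cancel, sgsGradient_of_sweep hQW hx' hxp, sum_inner_single_right,
    Pi.sub_apply] at h

theorem IsBlockSymmetric.quadratic_growth_of_sweep (hQ : IsBlockSymmetric Q)
    (hQW : ∀ i a, Q i i (W i a) = a) (hWQ : ∀ i a, W i (Q i i a) = a)
    {p : X 0 → EReal} (hp_bot : ∀ x, p x ≠ ⊥)
    (hp_convex : ∀ (x y : X 0) (a b : ℝ), 0 ≤ a → 0 ≤ b → a + b = 1 →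
      p (a • x + b • y) ≤ (a : EReal) * p x + (b : EReal) * p y)
    (hx' : ∀ i, i ≠ 0 →
      x' i = W i (c i + δ' i - strictLowerMulVec Q z i - strictUpperMulVec Q x' i))
    (hxp0 : ∀ t : X 0,
      p (xp 0) + ((quadObjective Q c (Function.update x' 0 (xp 0)) - ⟪δ 0, xp 0⟫ : ℝ) : EReal) ≤
      p t + ((quadObjective Q c (Function.update x' 0 t) - ⟪δ 0, t⟫ : ℝ) : EReal))
    (hxp : ∀ i, i ≠ 0 →
      xp i = W i (c i + δ i - strictLowerMulVec Q xp i - strictUpperMulVec Q x' i))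
    (x : ∀ i, X i) :
    p (xp 0) + (sgsObjective Q W c z (sgsDelta Q W δ' δ) xp : EReal) +
        (1/2 * blockWeightedNormSq W (lowerMulVec Q (x - xp)) : ℝ) ≤
      p (x 0) + (sgsObjective Q W c z (sgsDelta Q W δ' δ) x : EReal) := by
  have hvar := hQ.le_add_inner_of_forall_le_update hp_bot hp_convex hxp0 (x 0)
  rw [hQ.sgsObjective_eq_of_sweep hQW hWQ hx' hxp x, EReal.coe_add, EReal.coe_add]
  refine (add_le_add (add_le_add hvar le_rfl) le_rfl).trans_eq ?_
  abel

end Sweep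

end

theorem sGS_decomposition_theorem_general (s : ℕ)
    {Xs : Fin (s + 2) → Type*} [∀ i, NormedAddCommGroup (Xs i)]
    [∀ i, InnerProductSpace ℝ (Xs i)] [∀ i, FiniteDimensional ℝ (Xs i)]
    (Qb : ∀ i j, Xs j →L[ℝ] Xs i)
    (hsym : ∀ i j, Qb i j = ContinuousLinearMap.adjoint (Qb j i))
    (hpd : ∀ i, ∀ w : Xs i, w ≠ 0 → 0 < ⟪w, Qb i i w⟫)
    (Qinv : ∀ i, Xs i →L[ℝ] Xs i)
    (hQinv₁ : ∀ i, (Qb i i).comp (Qinv i) = ContinuousLinearMap.id ℝ (Xs i))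
    (hQinv₂ : ∀ i, (Qinv i).comp (Qb i i) = ContinuousLinearMap.id ℝ (Xs i))
    (p : Xs 0 → EReal)
    (hp_proper : ∀ x, p x ≠ ⊥) (hp_nontriv : ∃ x, p x ≠ ⊤)
    (hp_convex : ∀ (x y : Xs 0) (a b : ℝ), 0 ≤ a → 0 ≤ b → a + b = 1 →
      p (a • x + b • y) ≤ (a : EReal) * p x + (b : EReal) * p y)
    (c z δ' δ : ∀ i, Xs i)
    -- the quadratic part q(x) = ½⟨x,Qx⟩ − ⟨c,x⟩
    (q : (∀ i, Xs i) → ℝ)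
    (hq : ∀ x, q x = 1/2 * (∑ i, ⟪x i, ∑ j, Qb i j (x j)⟫) - ∑ i, ⟪c i, x i⟫)
    -- Δ(δ',δ) = δ + U D⁻¹ (δ − δ')
    (Δ : ∀ i, Xs i)
    (hΔ : ∀ i, Δ i = δ i +
      ∑ j ∈ Finset.univ.filter (fun j => i < j), Qb i j (Qinv j (δ j - δ' j)))
    -- the sGS seminorm ‖w‖²_S with S = U D⁻¹ U*
    (SnormSq : (∀ i, Xs i) → ℝ)
    (hS : ∀ w, SnormSq w = ∑ j,
      ⟪∑ k ∈ Finset.univ.filter (fun k => k < j), Qb j k (w k),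
        Qinv j (∑ k ∈ Finset.univ.filter (fun k => k < j), Qb j k (w k))⟫)
    -- the objective of the proximal problem
    (F : (∀ i, Xs i) → EReal)
    (hF : ∀ x, F x = p (x 0) +
      ((q x + 1/2 * SnormSq (fun i => x i - z i) - ∑ i, ⟪x i, Δ i⟫ : ℝ) : EReal))
    -- backward sweep: for i = s,…,2,
    -- x′_i = Q_{i,i}⁻¹(c_i + δ′_i − Σ_{j<i} Q_{j,i}* z_j − Σ_{j>i} Q_{i,j} x′_j)
    (x' : ∀ i, Xs i)
    (hx' : ∀ i, i ≠ 0 → x' i = Qinv i (c i + δ' i -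
      (∑ j ∈ Finset.univ.filter (fun j => j < i), Qb i j (z j)) -
      (∑ j ∈ Finset.univ.filter (fun j => i < j), Qb i j (x' j))))
    -- forward sweep
    (xp : ∀ i, Xs i)
    (hxp0 : ∀ t : Xs 0,
      p (xp 0) + ((q (Function.update x' 0 (xp 0)) - ⟪δ 0, xp 0⟫ : ℝ) : EReal) ≤
      p t + ((q (Function.update x' 0 t) - ⟪δ 0, t⟫ : ℝ) : EReal))
    (hxpi : ∀ i, i ≠ 0 → xp i = Qinv i (c i + δ i -
      (∑ j ∈ Finset.univ.filter (fun j => j < i), Qb i j (xp j)) -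
      (∑ j ∈ Finset.univ.filter (fun j => i < j), Qb i j (x' j)))) :
    (∀ x : ∀ i, Xs i, F xp ≤ F x) ∧
    (∀ x : ∀ i, Xs i, (∀ w : ∀ i, Xs i, F x ≤ F w) → x = xp) := by
  obtain rfl : q = quadObjective Qb c := funext hq
  obtain rfl : SnormSq = sgsNormSq Qb Qinv := funext hS
  obtain rfl : Δ = sgsDelta Qb Qinv δ' δ := funext hΔ
  have hQ : IsBlockSymmetric Qb := fun i j a b => by
    rw [hsym, ContinuousLinearMap.adjoint_inner_left]
  have hQW i a : Qb i i (Qinv i a) = a := DFunLike.congr_fun (hQinv₁ i) a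
  have hWQ i : Function.LeftInverse (Qinv i) (Qb i i) := DFunLike.congr_fun (hQinv₂ i)
  have hWpos i (a : Xs i) (ha : a ≠ 0) : 0 < ⟪a, Qinv i a⟫ :=
    inner_map_self_pos_of_rightInverse (hpd i) (hQW i) ha
  set R := fun x => 1/2 * blockWeightedNormSq Qinv (lowerMulVec Qb (x - xp))
  have hgrowth x : F xp + (R x : EReal) ≤ F x := by
    rw [hF, hF]
    exact hQ.quadratic_growth_of_sweep hQW hWQ hp_proper hp_convex hx' hxp0 hxpi x
  have hmin x : F xp ≤ F x := (le_add_of_nonneg_right (EReal.coe_nonneg.2 (mul_nonneg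
    (by norm_num) (blockWeightedNormSq_nonneg hWpos _)))).trans (hgrowth x)
  refine ⟨hmin, fun x hx => ?_⟩
  obtain ⟨t, ht⟩ := hp_nontriv
  have hfin : F xp ≠ ⊤ := ((hmin (Function.update xp 0 t)).trans_lt (by
    rw [hF, Function.update_self]; exact EReal.add_lt_top ht (EReal.coe_ne_top _))).ne
  have hbot : F xp ≠ ⊥ := by
    rw [hF]; exact EReal.add_ne_bot_iff.2 ⟨hp_proper _, EReal.coe_ne_bot _⟩
  have hR : R x ≤ 0 := by
    have := (hgrowth x).trans (hx xp)
    rw [← EReal.coe_toReal hfin hbot, ← EReal.coe_add, EReal.coe_le_coe_iff] at this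
    linarith
  by_contra hne
  refine hR.not_gt (mul_pos (by norm_num) (blockWeightedNormSq_pos hWpos fun h => hne ?_))
  exact sub_eq_zero.1 (eq_zero_of_lowerMulVec_eq_zero (fun i => (hWQ i).injective) h)

theorem sGS_decomposition_theorem (s : ℕ)
    {Xs : Fin (s + 2) → Type*} [∀ i, NormedAddCommGroup (Xs i)]
    [∀ i, InnerProductSpace ℝ (Xs i)] [∀ i, FiniteDimensional ℝ (Xs i)]
    (Qb : ∀ i j, Xs j →L[ℝ] Xs i)
    (hsym : ∀ i j, Qb i j = ContinuousLinearMap.adjoint (Qb j i))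
    (hpsd : ∀ x : ∀ i, Xs i, 0 ≤ ∑ i, ⟪x i, ∑ j, Qb i j (x j)⟫)
    (hpd : ∀ i, ∀ w : Xs i, w ≠ 0 → 0 < ⟪w, Qb i i w⟫)
    (Qinv : ∀ i, Xs i →L[ℝ] Xs i)
    (hQinv₁ : ∀ i, (Qb i i).comp (Qinv i) = ContinuousLinearMap.id ℝ (Xs i))
    (hQinv₂ : ∀ i, (Qinv i).comp (Qb i i) = ContinuousLinearMap.id ℝ (Xs i))
    (p : Xs 0 → EReal)
    (hp_proper : ∀ x, p x ≠ ⊥) (hp_nontriv : ∃ x, p x ≠ ⊤)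
    (hp_lsc : LowerSemicontinuous p)
    (hp_convex : ∀ (x y : Xs 0) (a b : ℝ), 0 ≤ a → 0 ≤ b → a + b = 1 →
      p (a • x + b • y) ≤ (a : EReal) * p x + (b : EReal) * p y)
    (c z δ' δ : ∀ i, Xs i)
    (hδ1 : δ' 0 = δ 0)
    -- the quadratic part q(x) = ½⟨x,Qx⟩ − ⟨c,x⟩
    (q : (∀ i, Xs i) → ℝ)
    (hq : ∀ x, q x = 1/2 * (∑ i, ⟪x i, ∑ j, Qb i j (x j)⟫) - ∑ i, ⟪c i, x i⟫)
    -- Δ(δ',δ) = δ + U D⁻¹ (δ − δ')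
    (Δ : ∀ i, Xs i)
    (hΔ : ∀ i, Δ i = δ i +
      ∑ j ∈ Finset.univ.filter (fun j => i < j), Qb i j (Qinv j (δ j - δ' j)))
    -- the sGS seminorm ‖w‖²_S with S = U D⁻¹ U*
    (SnormSq : (∀ i, Xs i) → ℝ)
    (hS : ∀ w, SnormSq w = ∑ j,
      ⟪∑ k ∈ Finset.univ.filter (fun k => k < j), Qb j k (w k),
        Qinv j (∑ k ∈ Finset.univ.filter (fun k => k < j), Qb j k (w k))⟫)
    -- the objective of the proximal problem
    (F : (∀ i, Xs i) → EReal)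
    (hF : ∀ x, F x = p (x 0) +
      ((q x + 1/2 * SnormSq (fun i => x i - z i) - ∑ i, ⟪x i, Δ i⟫ : ℝ) : EReal))
    -- backward sweep: for i = s,…,2,
    -- x′_i = Q_{i,i}⁻¹(c_i + δ′_i − Σ_{j<i} Q_{j,i}* z_j − Σ_{j>i} Q_{i,j} x′_j)
    (x' : ∀ i, Xs i)
    (hx' : ∀ i, i ≠ 0 → x' i = Qinv i (c i + δ' i -
      (∑ j ∈ Finset.univ.filter (fun j => j < i), Qb i j (z j)) -
      (∑ j ∈ Finset.univ.filter (fun j => i < j), Qb i j (x' j))))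
    -- forward sweep
    (xp : ∀ i, Xs i)
    (hxp0 : ∀ t : Xs 0,
      p (xp 0) + ((q (Function.update x' 0 (xp 0)) - ⟪δ 0, xp 0⟫ : ℝ) : EReal) ≤
      p t + ((q (Function.update x' 0 t) - ⟪δ 0, t⟫ : ℝ) : EReal))
    (hxpi : ∀ i, i ≠ 0 → xp i = Qinv i (c i + δ i -
      (∑ j ∈ Finset.univ.filter (fun j => j < i), Qb i j (xp j)) -
      (∑ j ∈ Finset.univ.filter (fun j => i < j), Qb i j (x' j)))) :
    (∀ x : ∀ i, Xs i, F xp ≤ F x) ∧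
    (∀ x : ∀ i, Xs i, (∀ w : ∀ i, Xs i, F x ≤ F w) → x = xp) :=
  sGS_decomposition_theorem_general s Qb hsym hpd Qinv hQinv₁ hQinv₂ p hp_proper hp_nontriv
    hp_convex c z δ' δ q hq Δ hΔ SnormSq hS F hF x' hx' xp hxp0 hxpi
end

section
/- (Positive semidefiniteness of the norm-weighted block-diagonal proximal term) Let X and Y_1,…,Y_N be finite-dimensional real inner product spaces, B_i : X → Y_i linear maps, B = [B_1;…;B_N] : X → Ȳ with Ȳ = Y_1×⋯×Y_N. Define the block diagonal operator J̄ := diag( B_i B_i* + (Σ_{j=1, j≠i}^N ‖B_i B_j*‖) I_{Y_i} ; i = 1,…,N ) − BB*, where ‖·‖ denotes the operator norm. Then J̄ is self-adjoint positive semidefinite; equivalently, for every ȳ = (ȳ_1,…,ȳ_N) ∈ Ȳ, ‖Σ_{i=1}^N B_i* ȳ_i‖² ≤ Σ_{i=1}^N ( ‖B_i* ȳ_i‖² + (Σ_{j≠i} ‖B_i B_j*‖) ‖ȳ_i‖² ). -/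
/- STATEMENT 12: Positive semidefiniteness of the norm-weighted block-diagonal
   proximal term J̄ = diag(B_iB_i* + (Σ_{j≠i} ‖B_iB_j*‖) I) − BB*.
   Since ⟨ȳ, BB*ȳ⟩ = ‖Σ_i B_i* ȳ_i‖², positive semidefiniteness of the
   (manifestly self-adjoint) operator J̄ is exactly the stated quadratic-form
   inequality, which we formalize; ‖B_i B_j*‖ is the operator norm of the
   composite continuous linear map B_i ∘ B_j*. -/

open scoped RealInnerProductSpace

theorem norm_weighted_block_diag_psd
    {X : Type*} [NormedAddCommGroup X] [InnerProductSpace ℝ X] [FiniteDimensional ℝ X]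
    {N : ℕ} {Yb : Fin N → Type*} [∀ i, NormedAddCommGroup (Yb i)]
    [∀ i, InnerProductSpace ℝ (Yb i)] [∀ i, FiniteDimensional ℝ (Yb i)]
    (B : ∀ i, X →L[ℝ] Yb i) (yb : ∀ i, Yb i) :
    ‖∑ i, ContinuousLinearMap.adjoint (B i) (yb i)‖^2 ≤
      ∑ i, (‖ContinuousLinearMap.adjoint (B i) (yb i)‖^2 +
        (∑ j ∈ Finset.univ.erase i, ‖(B i).comp (ContinuousLinearMap.adjoint (B j))‖)
          * ‖yb i‖^2) := by
  classical
  set x : ∀ i, X := fun i => ContinuousLinearMap.adjoint (B i) (yb i) with hx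
  set c : Fin N → Fin N → ℝ :=
    fun i j => ‖(B i).comp (ContinuousLinearMap.adjoint (B j))‖ with hc
  have csymm : ∀ i j, c i j = c j i := by
    intro i j
    have : (B j).comp (ContinuousLinearMap.adjoint (B i)) =
        ContinuousLinearMap.adjoint ((B i).comp (ContinuousLinearMap.adjoint (B j))) := by
      rw [ContinuousLinearMap.adjoint_comp, ContinuousLinearMap.adjoint_adjoint]
    rw [hc]
    dsimp only
    rw [this]
    exact (LinearIsometryEquiv.norm_map ContinuousLinearMap.adjoint _).symm
  have key : ∀ i j, ⟪x i, x j⟫ ≤ c i j * (‖yb i‖ * ‖yb j‖) := by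
    intro i j
    have h1 : ⟪x i, x j⟫ = ⟪yb i, ((B i).comp (ContinuousLinearMap.adjoint (B j))) (yb j)⟫ := by
      simp [hx, ContinuousLinearMap.adjoint_inner_left]
    rw [h1]
    calc ⟪yb i, ((B i).comp (ContinuousLinearMap.adjoint (B j))) (yb j)⟫
        ≤ ‖yb i‖ * ‖((B i).comp (ContinuousLinearMap.adjoint (B j))) (yb j)‖ :=
          real_inner_le_norm _ _
      _ ≤ ‖yb i‖ * (c i j * ‖yb j‖) :=
          mul_le_mul_of_nonneg_left
            (((B i).comp (ContinuousLinearMap.adjoint (B j))).le_opNorm (yb j))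
            (norm_nonneg _)
      _ = c i j * (‖yb i‖ * ‖yb j‖) := by ring
  have key2 : ∀ i j, ⟪x i, x j⟫ ≤ c i j * ((‖yb i‖^2 + ‖yb j‖^2) / 2) := by
    intro i j
    refine (key i j).trans ?_
    have : ‖yb i‖ * ‖yb j‖ ≤ (‖yb i‖^2 + ‖yb j‖^2) / 2 := by nlinarith [sq_nonneg (‖yb i‖ - ‖yb j‖)]
    exact mul_le_mul_of_nonneg_left this (norm_nonneg _)
  have expand : ‖∑ i, x i‖^2 = ∑ i, (‖x i‖^2 + ∑ j ∈ Finset.univ.erase i, ⟪x i, x j⟫) := by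
    rw [← real_inner_self_eq_norm_sq, sum_inner]
    refine Finset.sum_congr rfl fun i _ => ?_
    rw [inner_sum, ← Finset.add_sum_erase _ _ (Finset.mem_univ i),
      real_inner_self_eq_norm_sq]
  rw [expand]
  have swap : ∑ i, ∑ j ∈ Finset.univ.erase i, c i j * ‖yb j‖^2
      = ∑ i, ∑ j ∈ Finset.univ.erase i, c i j * ‖yb i‖^2 := by
    rw [Finset.sum_comm' (s' := fun j => Finset.univ.erase j) (t' := Finset.univ)
      (fun i j => by simp [Finset.mem_erase, eq_comm, and_comm])]
    exact Finset.sum_congr rfl fun j _ => Finset.sum_congr rfl fun i hi => by rw [csymm]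
  have cross : ∑ i, ∑ j ∈ Finset.univ.erase i, ⟪x i, x j⟫
      ≤ ∑ i, (∑ j ∈ Finset.univ.erase i, c i j) * ‖yb i‖^2 := by
    calc ∑ i, ∑ j ∈ Finset.univ.erase i, ⟪x i, x j⟫
        ≤ ∑ i, ∑ j ∈ Finset.univ.erase i, c i j * ((‖yb i‖^2 + ‖yb j‖^2) / 2) := by
          gcongr with i _ j _; exact key2 i j
      _ = (∑ i, ∑ j ∈ Finset.univ.erase i, c i j * ‖yb i‖^2
            + ∑ i, ∑ j ∈ Finset.univ.erase i, c i j * ‖yb j‖^2) / 2 := by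
          rw [← Finset.sum_add_distrib, Finset.sum_div]
          refine Finset.sum_congr rfl fun i _ => ?_
          rw [← Finset.sum_add_distrib, Finset.sum_div]
          refine Finset.sum_congr rfl fun j _ => by ring
      _ = ∑ i, (∑ j ∈ Finset.univ.erase i, c i j) * ‖yb i‖^2 := by
          rw [swap, add_self_div_two]
          exact Finset.sum_congr rfl fun i _ => (Finset.sum_mul _ _ _).symm
  calc ∑ i, (‖x i‖^2 + ∑ j ∈ Finset.univ.erase i, ⟪x i, x j⟫)
      = ∑ i, ‖x i‖^2 + ∑ i, ∑ j ∈ Finset.univ.erase i, ⟪x i, x j⟫ :=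
        Finset.sum_add_distrib
    _ ≤ ∑ i, ‖x i‖^2 + ∑ i, (∑ j ∈ Finset.univ.erase i, c i j) * ‖yb i‖^2 := by linarith [cross]
    _ = _ := by rw [← Finset.sum_add_distrib]
end
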